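/- arXiv:1805.11742 — 4 statements merged into one kernel-verified Lean document; each statement's English description precedes it below -/
import Mathlib

section
/- Suppose p = 0 (so q = 1). Then the spectrum of U₀ on H consists exactly of the two points i e^{iγ/2} and −i e^{iγ/2}, and both are eigenvalues of U₀ (i.e. σ(U₀) = σ_p(U₀) = {± i e^{iγ/2}}). -/
noncomputable section

/-- The state space `H = ℓ²(ℤ; ℂ²)`. -/
abbrev H2 : Type := lp (fun _ : ℤ => EuclideanSpace ℂ (Fin 2)) 2

/-- `⟨x⟩ = √(1+x²)`. -/
def jap (x : ℤ) : ℝ := Real.sqrt (1 + (x : ℝ) ^ 2)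

/-- The arc `J_γ`. -/
def Jgamma (p γ : ℝ) : Set ℝ :=
  Set.Icc (Real.arccos p + γ / 2) (Real.pi - Real.arccos p + γ / 2) ∪
    Set.Icc (Real.pi + Real.arccos p + γ / 2) (2 * Real.pi - Real.arccos p + γ / 2)

/-- The threshold set `J_{γ,T}`. -/
def JgammaT (p γ : ℝ) : Set ℝ :=
  {Real.arccos p + γ / 2, Real.pi - Real.arccos p + γ / 2,
    Real.pi + Real.arccos p + γ / 2, 2 * Real.pi - Real.arccos p + γ / 2}

/-- `μ` is an eigenvalue of the bounded operator `U`. -/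
def IsEigenvalue (U : H2 →L[ℂ] H2) (μ : ℂ) : Prop :=
  ∃ ψ : H2, ψ ≠ 0 ∧ U ψ = μ • ψ

/-- The discrete spectrum: isolated points of the spectrum that are eigenvalues
of finite multiplicity. -/
def discreteSpectrum (U : H2 →L[ℂ] H2) : Set ℂ :=
  {μ | μ ∈ spectrum ℂ U ∧
    (∃ ε > 0, ∀ ν ∈ spectrum ℂ U, ν ≠ μ → ε ≤ ‖ν - μ‖) ∧
    IsEigenvalue U μ ∧
    FiniteDimensional ℂ (LinearMap.ker ((U : H2 →ₗ[ℂ] H2) - μ • LinearMap.id))}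

/-- The essential spectrum `σ_ess(U) = σ(U) \ σ_d(U)`. -/
def essSpectrum (U : H2 →L[ℂ] H2) : Set ℂ := spectrum ℂ U \ discreteSpectrum U

set_option maxHeartbeats 1000000

/-- for `p = 0` the spectrum of the free quantum walk `U₀ = SC₀`
consists exactly of the two eigenvalues `± i e^{iγ/2}`. -/
theorem spectrum_U0_p_eq_zero
    (p q α β γ : ℝ)
    (hp : p = 0) (hq : q ∈ Set.Icc (0 : ℝ) 1) (hpq : p ^ 2 + q ^ 2 = 1)
    (hα : α ∈ Set.Ico 0 (2 * Real.pi)) (hβ : β ∈ Set.Ico 0 (2 * Real.pi))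
    (hγ : γ ∈ Set.Ico 0 (2 * Real.pi))
    (U₀ : H2 →L[ℂ] H2) (hU₀ : U₀ ∈ unitary (H2 →L[ℂ] H2))
    (hU₀eq : ∀ (ψ : H2) (x : ℤ),
      (U₀ ψ) x 0 = (p : ℂ) * Complex.exp (α * Complex.I) * ψ (x + 1) 0
          + (q : ℂ) * Complex.exp (β * Complex.I) * ψ (x + 1) 1 ∧
      (U₀ ψ) x 1 = -(q : ℂ) * Complex.exp ((γ - β : ℝ) * Complex.I) * ψ (x - 1) 0
          + (p : ℂ) * Complex.exp ((γ - α : ℝ) * Complex.I) * ψ (x - 1) 1) :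
    spectrum ℂ U₀ =
        {Complex.I * Complex.exp ((γ / 2 : ℝ) * Complex.I),
          -Complex.I * Complex.exp ((γ / 2 : ℝ) * Complex.I)} ∧
      {μ : ℂ | IsEigenvalue U₀ μ} =
        {Complex.I * Complex.exp ((γ / 2 : ℝ) * Complex.I),
          -Complex.I * Complex.exp ((γ / 2 : ℝ) * Complex.I)} := by
  subst hp
  have hq1 : q = 1 := by
    rcases hq with ⟨h0, h1⟩
    nlinarith [sq_nonneg (q - 1)]
  subst hq1
  set ec : ℂ := Complex.exp ((γ : ℝ) * Complex.I) with hecdef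
  set lam : ℂ := Complex.I * Complex.exp ((γ / 2 : ℝ) * Complex.I) with hlam
  have hexp2 : Complex.exp (((γ / 2 : ℝ) : ℂ) * Complex.I) ^ 2 = ec := by
    rw [sq, ← Complex.exp_add, hecdef]
    congr 1
    push_cast
    ring
  have hlamsq : lam ^ 2 = -ec := by
    rw [hlam, mul_pow, Complex.I_sq, hexp2]
    ring
  have e1 : Complex.exp (((β : ℝ) : ℂ) * Complex.I) *
      Complex.exp (((γ - β : ℝ) : ℂ) * Complex.I) = ec := by
    rw [← Complex.exp_add, hecdef]
    congr 1
    push_cast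
    ring
  have hgb : Complex.exp (((γ - β : ℝ) : ℂ) * Complex.I) =
      ec * Complex.exp (-(((β : ℝ) : ℂ) * Complex.I)) := by
    rw [hecdef, ← Complex.exp_add]
    congr 1
    push_cast
    ring
  -- the key operator identity U₀² = -e^{iγ}
  have hsq : ∀ ψ : H2, U₀ (U₀ ψ) = (-ec) • ψ := by
    intro ψ
    apply lp.ext
    funext x
    ext i
    fin_cases i
    · rw [lp.coeFn_smul, Pi.smul_apply]
      show (U₀ (U₀ ψ)) x 0 = (-ec) • (ψ x 0)
      rw [(hU₀eq (U₀ ψ) x).1, (hU₀eq ψ (x + 1)).2]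
      have hx : x + 1 - 1 = x := by ring
      rw [hx]
      simp only [Complex.ofReal_zero, zero_mul, add_zero, zero_add, Complex.ofReal_one,
        one_mul, mul_zero, smul_eq_mul, neg_one_mul]
      calc Complex.exp (((β : ℝ) : ℂ) * Complex.I) *
            (-Complex.exp (((γ - β : ℝ) : ℂ) * Complex.I) * ψ x 0)
          = -(Complex.exp (((β : ℝ) : ℂ) * Complex.I) *
              Complex.exp (((γ - β : ℝ) : ℂ) * Complex.I)) * ψ x 0 := by ring
        _ = -ec * ψ x 0 := by rw [e1]
    · rw [lp.coeFn_smul, Pi.smul_apply]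
      show (U₀ (U₀ ψ)) x 1 = (-ec) • (ψ x 1)
      rw [(hU₀eq (U₀ ψ) x).2, (hU₀eq ψ (x - 1)).1]
      have hx : x - 1 + 1 = x := by ring
      rw [hx]
      simp only [Complex.ofReal_zero, zero_mul, add_zero, zero_add, Complex.ofReal_one,
        one_mul, mul_zero, smul_eq_mul, neg_one_mul]
      calc -Complex.exp (((γ - β : ℝ) : ℂ) * Complex.I) *
            (Complex.exp (((β : ℝ) : ℂ) * Complex.I) * ψ x 1)
          = -(Complex.exp (((β : ℝ) : ℂ) * Complex.I) *
              Complex.exp (((γ - β : ℝ) : ℂ) * Complex.I)) * ψ x 1 := by ring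
        _ = -ec * ψ x 1 := by rw [e1]
  -- operator form
  have hop : U₀ * U₀ = (-ec) • (1 : H2 →L[ℂ] H2) := by
    ext ψ
    rw [ContinuousLinearMap.mul_apply, hsq]
    simp
  -- roots of μ² = -e^{iγ}
  have hroots : ∀ μ : ℂ, μ ^ 2 = -ec → μ = lam ∨ μ = -lam := by
    intro μ hμ
    have h : (μ - lam) * (μ + lam) = 0 := by
      calc (μ - lam) * (μ + lam) = μ ^ 2 - lam ^ 2 := by ring
        _ = 0 := by rw [hμ, hlamsq]; ring
    rcases mul_eq_zero.mp h with h | h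
    · exact Or.inl (sub_eq_zero.mp h)
    · exact Or.inr (eq_neg_of_add_eq_zero_left h)
  -- every μ with μ² = -e^{iγ} is an eigenvalue
  have hev : ∀ μ : ℂ, μ ^ 2 = -ec → IsEigenvalue U₀ μ := by
    intro μ hμ
    set b : ℂ := μ * Complex.exp (-(((β : ℝ) : ℂ) * Complex.I)) with hb
    set ψ : H2 := lp.single 2 (0 : ℤ) (EuclideanSpace.single 0 (1 : ℂ)) +
      lp.single 2 (1 : ℤ) (EuclideanSpace.single 1 b) with hψdef
    have hψ0 : ∀ x : ℤ, ψ x 0 = if x = 0 then 1 else 0 := by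
      intro x
      rw [hψdef, lp.coeFn_add, Pi.add_apply]
      by_cases hx : x = 0
      · subst hx
        rw [lp.single_apply_self, lp.single_apply_ne 2 1 _ (by norm_num : (0 : ℤ) ≠ 1)]
        simp [EuclideanSpace.single_apply]
      · by_cases hx1 : x = 1
        · subst hx1
          rw [lp.single_apply_self, lp.single_apply_ne 2 0 _ (by norm_num : (1 : ℤ) ≠ 0)]
          simp [EuclideanSpace.single_apply]
        · rw [lp.single_apply_ne 2 0 _ hx, lp.single_apply_ne 2 1 _ hx1]
          simp [hx]
    have hψ1 : ∀ x : ℤ, ψ x 1 = if x = 1 then b else 0 := by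
      intro x
      rw [hψdef, lp.coeFn_add, Pi.add_apply]
      by_cases hx : x = 0
      · subst hx
        rw [lp.single_apply_self, lp.single_apply_ne 2 1 _ (by norm_num : (0 : ℤ) ≠ 1)]
        simp [EuclideanSpace.single_apply]
      · by_cases hx1 : x = 1
        · subst hx1
          rw [lp.single_apply_self, lp.single_apply_ne 2 0 _ (by norm_num : (1 : ℤ) ≠ 0)]
          simp [EuclideanSpace.single_apply]
        · rw [lp.single_apply_ne 2 0 _ hx, lp.single_apply_ne 2 1 _ hx1]
          simp [hx1]
    refine ⟨ψ, ?_, ?_⟩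
    · intro h
      have h00 : ψ (0 : ℤ) 0 = 0 := by rw [h]; rfl
      rw [hψ0 0] at h00
      simp at h00
    · apply lp.ext
      funext x
      ext i
      have hebb : Complex.exp (((β : ℝ) : ℂ) * Complex.I) *
          Complex.exp (-(((β : ℝ) : ℂ) * Complex.I)) = 1 := by
        rw [← Complex.exp_add, add_neg_cancel, Complex.exp_zero]
      fin_cases i
      · rw [lp.coeFn_smul, Pi.smul_apply]
        show (U₀ ψ) x 0 = μ • (ψ x 0)
        rw [(hU₀eq ψ x).1, hψ1 (x + 1), hψ0 x]
        simp only [Complex.ofReal_zero, zero_mul, add_zero, zero_add, Complex.ofReal_one,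
          one_mul, smul_eq_mul]
        by_cases hx : x = 0
        · subst hx
          rw [if_pos (by norm_num : (0 : ℤ) + 1 = 1), if_pos rfl, hb]
          calc Complex.exp (((β : ℝ) : ℂ) * Complex.I) *
                (μ * Complex.exp (-(((β : ℝ) : ℂ) * Complex.I)))
              = μ * (Complex.exp (((β : ℝ) : ℂ) * Complex.I) *
                  Complex.exp (-(((β : ℝ) : ℂ) * Complex.I))) := by ring
            _ = μ * 1 := by rw [hebb]
        · have hx1 : ¬ (x + 1 = 1) := fun h => hx (by omega)
          rw [if_neg hx1, if_neg hx, mul_zero, mul_zero]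
      · rw [lp.coeFn_smul, Pi.smul_apply]
        show (U₀ ψ) x 1 = μ • (ψ x 1)
        rw [(hU₀eq ψ x).2, hψ0 (x - 1), hψ1 x]
        simp only [Complex.ofReal_zero, zero_mul, add_zero, zero_add, Complex.ofReal_one,
          one_mul, smul_eq_mul, neg_one_mul]
        by_cases hx : x = 1
        · subst hx
          rw [if_pos (by norm_num : (1 : ℤ) - 1 = 0), if_pos rfl, mul_one, hb, hgb]
          have : μ * (μ * Complex.exp (-(((β : ℝ) : ℂ) * Complex.I))) =
              μ ^ 2 * Complex.exp (-(((β : ℝ) : ℂ) * Complex.I)) := by ring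
          rw [this, hμ]
          ring
        · have hx1 : ¬ (x - 1 = 0) := fun h => hx (by omega)
          simp [hx, hx1]
  -- eigenvalues lie in the spectrum
  have hspec_of_ev : ∀ μ : ℂ, IsEigenvalue U₀ μ → μ ∈ spectrum ℂ U₀ := by
    rintro μ ⟨ψ, hψ0, hψeq⟩
    rw [spectrum.mem_iff]
    rintro ⟨u, hu⟩
    have hker : (algebraMap ℂ (H2 →L[ℂ] H2) μ - U₀) ψ = 0 := by
      rw [ContinuousLinearMap.sub_apply, Algebra.algebraMap_eq_smul_one,
        ContinuousLinearMap.smul_apply, ContinuousLinearMap.one_apply, hψeq, sub_self]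
    apply hψ0
    calc ψ = ((↑u⁻¹ * ↑u : H2 →L[ℂ] H2)) ψ := by rw [u.inv_mul]; rfl
      _ = (↑u⁻¹ : H2 →L[ℂ] H2) ((↑u : H2 →L[ℂ] H2) ψ) := rfl
      _ = (↑u⁻¹ : H2 →L[ℂ] H2) 0 := by rw [hu, hker]
      _ = 0 := map_zero _
  -- eigenvalues satisfy μ² = -e^{iγ}
  have hev_sq : ∀ μ : ℂ, IsEigenvalue U₀ μ → μ ^ 2 = -ec := by
    rintro μ ⟨ψ, hψ0, hψeq⟩
    have h1 : U₀ (U₀ ψ) = (μ ^ 2) • ψ := by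
      rw [hψeq, map_smul, hψeq, smul_smul, sq]
    rw [hsq ψ] at h1
    have h2 : (μ ^ 2 - (-ec)) • ψ = 0 := by
      rw [sub_smul, h1, sub_self]
    rcases smul_eq_zero.mp h2 with h | h
    · exact sub_eq_zero.mp h
    · exact absurd h hψ0
  -- anything outside the two roots is in the resolvent set
  have hunit : ∀ μ : ℂ, μ ^ 2 ≠ -ec → IsUnit (algebraMap ℂ (H2 →L[ℂ] H2) μ - U₀) := by
    intro μ hμ
    have hne : μ ^ 2 + ec ≠ 0 := fun h0 => hμ (by linear_combination h0)
    set a : H2 →L[ℂ] H2 := μ • 1 - U₀ with ha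
    set bb : H2 →L[ℂ] H2 := μ • 1 + U₀ with hbb
    have hab : a * bb = (μ ^ 2 + ec) • 1 := by
      rw [ha, hbb]
      simp only [sub_mul, mul_sub, mul_add, add_mul, smul_mul_assoc, mul_smul_comm,
        one_mul, mul_one, hop, smul_smul]
      module
    have hba : bb * a = (μ ^ 2 + ec) • 1 := by
      rw [ha, hbb]
      simp only [sub_mul, mul_sub, mul_add, add_mul, smul_mul_assoc, mul_smul_comm,
        one_mul, mul_one, hop, smul_smul]
      module
    have halg : algebraMap ℂ (H2 →L[ℂ] H2) μ - U₀ = a := by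
      rw [ha, Algebra.algebraMap_eq_smul_one]
    rw [halg]
    refine ⟨⟨a, (μ ^ 2 + ec)⁻¹ • bb, ?_, ?_⟩, rfl⟩
    · rw [mul_smul_comm, hab, smul_smul, inv_mul_cancel₀ hne, one_smul]
    · rw [smul_mul_assoc, hba, smul_smul, inv_mul_cancel₀ hne, one_smul]
  have hEV : {μ : ℂ | IsEigenvalue U₀ μ} =
      {Complex.I * Complex.exp (((γ / 2 : ℝ) : ℂ) * Complex.I),
        -Complex.I * Complex.exp (((γ / 2 : ℝ) : ℂ) * Complex.I)} := by
    ext μ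
    simp only [Set.mem_setOf_eq, Set.mem_insert_iff, Set.mem_singleton_iff]
    constructor
    · intro h
      rcases hroots μ (hev_sq μ h) with h' | h'
      · exact Or.inl (by rw [h', hlam])
      · exact Or.inr (by rw [h', hlam]; ring)
    · rintro (h | h)
      · rw [h]
        exact hev lam hlamsq
      · have h2 : μ = -lam := by rw [h, hlam]; ring
        rw [h2]
        exact hev (-lam) (by rw [neg_pow, hlamsq]; ring)
  refine ⟨?_, hEV⟩
  ext μ
  simp only [Set.mem_insert_iff, Set.mem_singleton_iff]
  constructor
  · intro h
    by_contra hc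
    push_neg at hc
    have hμ2 : μ ^ 2 ≠ -ec := by
      intro h2
      rcases hroots μ h2 with h' | h'
      · exact hc.1 (by rw [h', hlam])
      · exact hc.2 (by rw [h', hlam]; ring)
    exact (spectrum.mem_iff.mp h) (hunit μ hμ2)
  · rintro (h | h)
    · apply hspec_of_ev
      rw [h]
      exact hev lam hlamsq
    · apply hspec_of_ev
      have h2 : μ = -lam := by rw [h, hlam]; ring
      rw [h2]
      exact hev (-lam) (by rw [neg_pow, hlamsq]; ring)
end
end

section
/- Let C(x) = [[a(x), b(x)], [c(x), d(x)]] ∈ U(2), x ∈ ℤ, be a coin with sup_{x∈ℤ} ‖C(x)‖_∞ < ∞ and suppose there exists δ > 0 with |a(x)| ≥ δ for all x ∈ ℤ. Let U = SC, θ ∈ ℝ, and let ψ ∈ H satisfy Uψ = e^{iθ}ψ and e^{k⟨·⟩}ψ ∈ H for every k > 0. Then ψ = 0. -/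
noncomputable section

/-- if the coin has uniformly bounded entries and `|a(x)| ≥ δ > 0`, then any
eigenfunction of `U = SC` decaying super-exponentially must vanish identically. -/
theorem superexponentially_decaying_eigenfunction_is_zero
    (a b c d : ℤ → ℂ)
    (hcoin : ∀ x : ℤ, !![a x, b x; c x, d x] ∈ Matrix.unitaryGroup (Fin 2) ℂ)
    (K : ℝ)
    (hK : ∀ x : ℤ, ‖a x‖ ≤ K ∧ ‖b x‖ ≤ K ∧
      ‖c x‖ ≤ K ∧ ‖d x‖ ≤ K)
    (δ : ℝ) (hδ : 0 < δ) (ha : ∀ x : ℤ, δ ≤ ‖a x‖)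
    (U : H2 →L[ℂ] H2) (hU : U ∈ unitary (H2 →L[ℂ] H2))
    (hUeq : ∀ (ψ : H2) (x : ℤ),
      (U ψ) x 0 = a (x + 1) * ψ (x + 1) 0 + b (x + 1) * ψ (x + 1) 1 ∧
      (U ψ) x 1 = c (x - 1) * ψ (x - 1) 0 + d (x - 1) * ψ (x - 1) 1)
    (θ : ℝ) (ψ : H2) (hψ : U ψ = Complex.exp (θ * Complex.I) • ψ)
    (hdecay : ∀ k : ℝ, 0 < k →
      Memℓp (fun x : ℤ => (Real.exp (k * jap x) : ℂ) • (ψ x : EuclideanSpace ℂ (Fin 2))) 2) :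
    ψ = 0 :=
  by
  classical
  set lam : ℂ := Complex.exp (θ * Complex.I) with hlamdef
  have hlam1 : ‖lam‖ = 1 := by
    rw [hlamdef, Complex.norm_exp]
    simp
  have hd : ∀ x : ℤ, δ ≤ ‖d x‖ := by
    intro x
    have h := hcoin x
    have h1 := (Matrix.mem_unitaryGroup_iff.mp h)
    have h2 := (Matrix.mem_unitaryGroup_iff'.mp h)
    have e1 := congrFun (congrFun h1 0) 0
    have e2 := congrFun (congrFun h2 1) 1
    simp [Matrix.mul_apply, Fin.sum_univ_two, Matrix.one_apply] at e1 e2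
    rw [Complex.mul_conj, Complex.mul_conj] at e1
    rw [mul_comm, mul_comm ((starRingEnd ℂ) (d x)), Complex.mul_conj, Complex.mul_conj] at e2
    have e3 : Complex.normSq (a x) = Complex.normSq (d x) := by
      have h4 : ((Complex.normSq (a x) : ℂ)) = (Complex.normSq (d x) : ℂ) := by
        linear_combination e1 - e2
      exact_mod_cast h4
    have heq : ‖d x‖ = ‖a x‖ := by
      rw [Complex.norm_def, Complex.norm_def, e3]
    rw [heq]; exact ha x
  have heq0 : ∀ x : ℤ, lam * ψ x 0 = a (x+1) * ψ (x+1) 0 + b (x+1) * ψ (x+1) 1 := by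
    intro x
    have h := (hUeq ψ x).1
    rw [hψ] at h
    rw [← h, lp.coeFn_smul]; rfl
  have heq1 : ∀ x : ℤ, lam * ψ (x+1) 1 = c x * ψ x 0 + d x * ψ x 1 := by
    intro x
    have h := (hUeq ψ (x+1)).2
    rw [hψ] at h
    have hx : x + 1 - 1 = x := by ring
    rw [hx] at h
    rw [← h, lp.coeFn_smul]; rfl
  have hKδ : δ ≤ K := le_trans (ha 0) (hK 0).1
  have hKpos : 0 < K := lt_of_lt_of_le hδ hKδ
  set M : ℝ := max (2*K) ((1 + 2*K^2)/δ) with hMdef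
  have hMpos : 0 < M := lt_of_lt_of_le (by positivity) (le_max_left _ _)
  set N : ℤ → ℝ := fun x => max (‖ψ x 0‖) (‖ψ x 1‖) with hNdef
  have hN0 : ∀ x, 0 ≤ N x := fun x =>
    le_trans (norm_nonneg _) (le_max_left _ _)
  have hstep : ∀ x : ℤ, N x ≤ M * N (x+1) := by
    intro x
    have hb0 : ‖ψ (x+1) 0‖ ≤ N (x+1) := le_max_left _ _
    have hb1 : ‖ψ (x+1) 1‖ ≤ N (x+1) := le_max_right _ _
    have hN1 : 0 ≤ N (x+1) := hN0 (x+1)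
    have h0 : ‖ψ x 0‖ ≤ 2*K * N (x+1) := by
      have habs : ‖lam * ψ x 0‖ = ‖ψ x 0‖ := by
        rw [norm_mul, hlam1, one_mul]
      rw [← habs, heq0 x]
      calc ‖a (x+1) * ψ (x+1) 0 + b (x+1) * ψ (x+1) 1‖
          ≤ ‖a (x+1) * ψ (x+1) 0‖ + ‖b (x+1) * ψ (x+1) 1‖ :=
            norm_add_le _ _
        _ = ‖a (x+1)‖ * ‖ψ (x+1) 0‖
            + ‖b (x+1)‖ * ‖ψ (x+1) 1‖ := by rw [norm_mul, norm_mul]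
        _ ≤ K * N (x+1) + K * N (x+1) := by
            gcongr
            · exact (hK (x+1)).1
            · exact (hK (x+1)).2.1
        _ = 2*K * N (x+1) := by ring
    have h1 : ‖ψ x 1‖ ≤ (1 + 2*K^2)/δ * N (x+1) := by
      have hdx : d x * ψ x 1 = lam * ψ (x+1) 1 - c x * ψ x 0 := by
        rw [heq1 x]; ring
      have habs : ‖d x‖ * ‖ψ x 1‖ ≤ (1 + 2*K^2) * N (x+1) := by
        rw [← norm_mul, hdx]
        have t1 : ‖lam * ψ (x+1) 1 - c x * ψ x 0‖
            ≤ ‖lam * ψ (x+1) 1‖ + ‖c x * ψ x 0‖ := by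
          simpa [sub_eq_add_neg] using norm_add_le (lam * ψ (x+1) 1) (-(c x * ψ x 0))
        have t2 : ‖lam * ψ (x+1) 1‖ = ‖ψ (x+1) 1‖ := by
          rw [norm_mul, hlam1, one_mul]
        have t3 : ‖c x * ψ x 0‖ ≤ K * (2*K*N (x+1)) := by
          rw [norm_mul]
          exact mul_le_mul (hK x).2.2.1 h0 (norm_nonneg _) (le_of_lt hKpos)
        rw [t2] at t1
        nlinarith [t1, t3, hb1]
      have hδd : δ * ‖ψ x 1‖ ≤ (1 + 2*K^2) * N (x+1) :=
        le_trans (mul_le_mul_of_nonneg_right (hd x) (norm_nonneg _)) habs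
      rw [div_mul_eq_mul_div, le_div_iff₀ hδ]
      linarith [hδd]
    refine max_le (le_trans h0 ?_) (le_trans h1 ?_)
    · exact mul_le_mul_of_nonneg_right (le_max_left _ _) hN1
    · exact mul_le_mul_of_nonneg_right (le_max_right _ _) hN1
  have hiter : ∀ (x : ℤ) (n : ℕ), N x ≤ M ^ n * N (x + n) := by
    intro x n
    induction n with
    | zero => simp
    | succ n ih =>
      calc N x ≤ M ^ n * N (x + n) := ih
        _ ≤ M ^ n * (M * N (x + n + 1)) :=
            mul_le_mul_of_nonneg_left (hstep (x + n)) (le_of_lt (pow_pos hMpos n))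
        _ = M ^ (n+1) * N (x + (n+1:ℕ)) := by
            rw [pow_succ]
            have hc : x + (n:ℤ) + 1 = x + ((n+1:ℕ):ℤ) := by push_cast; ring
            rw [hc]; ring
  have hbound : ∀ k : ℝ, 0 < k → ∃ C : ℝ, 0 ≤ C ∧
      ∀ x : ℤ, N x ≤ C * Real.exp (-(k * jap x)) := by
    intro k hk
    obtain ⟨C, hC0, hC⟩ : ∃ C : ℝ, 0 ≤ C ∧ ∀ x : ℤ,
        ‖(fun x : ℤ => (Real.exp (k * jap x) : ℂ) • (ψ x : EuclideanSpace ℂ (Fin 2))) x‖ ≤ C := by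
      set f := fun x : ℤ => (Real.exp (k * jap x) : ℂ) • (ψ x : EuclideanSpace ℂ (Fin 2))
        with hfdef
      have h := hdecay k hk
      have hs : Summable fun x => ‖f x‖ ^ (2:ENNReal).toReal := h.summable (by norm_num)
      simp only [ENNReal.toReal_ofNat] at hs
      refine ⟨Real.sqrt (∑' x, ‖f x‖ ^ (2:ℝ)), Real.sqrt_nonneg _, fun x => ?_⟩
      have hle : ‖f x‖ ^ (2:ℝ) ≤ ∑' y, ‖f y‖ ^ (2:ℝ) :=
        Summable.le_tsum hs x (fun y _ => by positivity)
      calc ‖f x‖ = Real.sqrt (‖f x‖ ^ (2:ℝ)) := by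
            rw [Real.rpow_two, Real.sqrt_sq (norm_nonneg _)]
        _ ≤ _ := Real.sqrt_le_sqrt hle
    refine ⟨C, hC0, fun x => ?_⟩
    have hnorm : ‖(fun x : ℤ => (Real.exp (k * jap x) : ℂ) • (ψ x : EuclideanSpace ℂ (Fin 2))) x‖
        = Real.exp (k * jap x) * ‖(ψ x : EuclideanSpace ℂ (Fin 2))‖ := by
      rw [norm_smul]
      congr 1
      rw [Complex.norm_of_nonneg (Real.exp_pos _).le]
    have hNnorm : N x ≤ ‖(ψ x : EuclideanSpace ℂ (Fin 2))‖ := by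
      apply max_le <;>
      · rw [EuclideanSpace.norm_eq]
        refine le_trans (le_of_eq (Real.sqrt_sq (norm_nonneg _)).symm) (Real.sqrt_le_sqrt ?_)
        exact Finset.single_le_sum (f := fun j => ‖ψ x j‖^2) (fun j _ => sq_nonneg _)
          (Finset.mem_univ _)
    have hCx := hC x
    rw [hnorm] at hCx
    have hfin : ‖(ψ x : EuclideanSpace ℂ (Fin 2))‖ ≤ C * Real.exp (-(k * jap x)) := by
      rw [Real.exp_neg, mul_comm C, inv_mul_eq_div, le_div_iff₀ (Real.exp_pos _)]
      linarith [hCx]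
    exact le_trans hNnorm hfin
  have hjap : ∀ x : ℤ, (x : ℝ) ≤ jap x := by
    intro x
    unfold jap
    calc (x:ℝ) ≤ |(x:ℝ)| := le_abs_self _
      _ = Real.sqrt ((x:ℝ)^2) := (Real.sqrt_sq_eq_abs _).symm
      _ ≤ _ := Real.sqrt_le_sqrt (by linarith)
  set k : ℝ := max 1 (Real.log M + 1) with hkdef
  have hk1 : (1:ℝ) ≤ k := le_max_left _ _
  have hkpos : 0 < k := lt_of_lt_of_le one_pos hk1
  have hr : M * Real.exp (-k) < 1 := by
    have h1 : M * Real.exp 1 ≤ Real.exp k := by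
      calc M * Real.exp 1 = Real.exp (Real.log M + 1) := by
            rw [Real.exp_add, Real.exp_log hMpos]
        _ ≤ Real.exp k := Real.exp_le_exp.2 (le_max_right _ _)
    have h2 : M < Real.exp k := by
      nlinarith [Real.exp_one_gt_d9, Real.exp_pos 1, hMpos]
    rw [Real.exp_neg, mul_inv_lt_iff₀' (Real.exp_pos _)]
    linarith [h2]
  have hr0 : 0 ≤ M * Real.exp (-k) := by positivity
  obtain ⟨C, hC0, hC⟩ := hbound k hkpos
  have hNzero : ∀ x₀ : ℤ, N x₀ = 0 := by
    intro x₀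
    have key : ∀ n : ℕ, N x₀ ≤ (C * Real.exp (-(k * x₀))) * (M * Real.exp (-k)) ^ n := by
      intro n
      calc N x₀ ≤ M ^ n * N (x₀ + n) := hiter x₀ n
        _ ≤ M ^ n * (C * Real.exp (-(k * jap (x₀ + n)))) :=
            mul_le_mul_of_nonneg_left (hC (x₀ + n)) (pow_pos hMpos n).le
        _ ≤ M ^ n * (C * Real.exp (-(k * ((x₀:ℝ) + n)))) := by
            have h5 := hjap (x₀ + n)
            push_cast at h5
            have hj : -(k * jap (x₀ + n)) ≤ -(k * ((x₀:ℝ) + n)) := by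
              have := mul_le_mul_of_nonneg_left h5 hkpos.le
              linarith
            have h6 : C * Real.exp (-(k * jap (x₀+n))) ≤ C * Real.exp (-(k*((x₀:ℝ)+n))) :=
              mul_le_mul_of_nonneg_left (Real.exp_le_exp.2 hj) hC0
            exact mul_le_mul_of_nonneg_left h6 (pow_pos hMpos n).le
        _ = (C * Real.exp (-(k * x₀))) * (M * Real.exp (-k)) ^ n := by
            rw [mul_pow, ← Real.exp_nat_mul]
            rw [show -(k * ((x₀:ℝ) + n)) = -(k * x₀) + (n:ℝ) * (-k) by ring, Real.exp_add]
            ring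
    have hlim : Filter.Tendsto
        (fun n : ℕ => (C * Real.exp (-(k * x₀))) * (M * Real.exp (-k)) ^ n)
        Filter.atTop (nhds 0) := by
      rw [show (0:ℝ) = (C * Real.exp (-(k * x₀))) * 0 by ring]
      exact (tendsto_pow_atTop_nhds_zero_of_lt_one hr0 hr).const_mul _
    have hle0 : N x₀ ≤ 0 := le_of_tendsto_of_tendsto' tendsto_const_nhds hlim fun n => key n
    exact le_antisymm hle0 (hN0 x₀)
  apply lp.ext
  funext x
  have h0 : ‖ψ x 0‖ = 0 :=
    le_antisymm (le_trans (le_max_left _ _) (le_of_eq (hNzero x))) (norm_nonneg _)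
  have h1 : ‖ψ x 1‖ = 0 :=
    le_antisymm (le_trans (le_max_right _ _) (le_of_eq (hNzero x))) (norm_nonneg _)
  have hz : (ψ x : EuclideanSpace ℂ (Fin 2)) = 0 := by
    ext i
    fin_cases i
    · exact norm_eq_zero.mp h0
    · exact norm_eq_zero.mp h1
  exact hz.trans (by rw [lp.coeFn_zero]; rfl)
end
end

section
/- Let β', γ' ∈ [0,2π), let C₁ = [[0, e^{iβ'}], [−e^{i(γ'−β')}, 0]] and U₁ = SC₁. Define ψ_±(x) = (1/√2)·(∓ i e^{i(β'−γ'/2)} δ(x+1), δ(x)) for x ∈ ℤ, where δ(x) = 1 if x = 0 and δ(x) = 0 otherwise. Then ‖ψ_±‖_H = 1 and U₁ψ_± = (± i e^{iγ'/2}) ψ_±; in particular ± i e^{iγ'/2} are eigenvalues of U₁. -/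
noncomputable section

open scoped ENNReal in

lemma aux_eig (β' γ' : ℝ) (U₁ : H2 →L[ℂ] H2)
    (hU₁eq : ∀ (ψ : H2) (x : ℤ),
      (U₁ ψ) x 0 = (0 : ℂ) * ψ (x + 1) 0 + Complex.exp (β' * Complex.I) * ψ (x + 1) 1 ∧
      (U₁ ψ) x 1 = -Complex.exp ((γ' - β' : ℝ) * Complex.I) * ψ (x - 1) 0
          + (0 : ℂ) * ψ (x - 1) 1)
    (s : ℂ) (hs2 : s ^ 2 = -1) (hs : ‖s‖ = 1) :
    ∃ ψ : H2,
      (∀ x : ℤ,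
        ψ x 0 = (1 / Real.sqrt 2 : ℂ) * (-s) *
            Complex.exp ((β' - γ' / 2 : ℝ) * Complex.I) * (if x + 1 = 0 then 1 else 0) ∧
        ψ x 1 = (1 / Real.sqrt 2 : ℂ) * (if x = 0 then 1 else 0)) ∧
      ‖ψ‖ = 1 ∧
      U₁ ψ = (s * Complex.exp ((γ' / 2 : ℝ) * Complex.I)) • ψ := by
  set c : ℂ := (1 / Real.sqrt 2 : ℂ) * (-s) * Complex.exp ((β' - γ' / 2 : ℝ) * Complex.I)
    with hc
  set d : ℂ := (1 / Real.sqrt 2 : ℂ) with hd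
  set f : ∀ _ : ℤ, EuclideanSpace ℂ (Fin 2) := fun x =>
    (WithLp.equiv 2 (Fin 2 → ℂ)).symm ![(if x + 1 = 0 then c else 0), (if x = 0 then d else 0)]
    with hf
  set ψ : H2 := ∑ i ∈ ({-1, 0} : Finset ℤ),
      (lp.single (E := fun _ : ℤ => EuclideanSpace ℂ (Fin 2)) 2 i (f i) : H2) with hψdef
  have hne : (-1 : ℤ) ∉ ({0} : Finset ℤ) := by decide
  have hsum : ψ = (lp.single (E := fun _ : ℤ => EuclideanSpace ℂ (Fin 2)) 2 (-1) (f (-1)) : H2)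
      + lp.single (E := fun _ : ℤ => EuclideanSpace ℂ (Fin 2)) 2 0 (f 0) := by
    rw [hψdef, Finset.sum_insert hne, Finset.sum_singleton]
  have hcoord : ∀ x : ℤ, (ψ : ∀ _ : ℤ, EuclideanSpace ℂ (Fin 2)) x = f x := by
    intro x
    rw [hsum, lp.coeFn_add, Pi.add_apply]
    rcases eq_or_ne x (-1) with h1 | h1
    · subst h1
      rw [lp.single_apply_self, lp.single_apply_ne _ _ _ (by decide : (-1:ℤ) ≠ 0), add_zero]
    · rcases eq_or_ne x 0 with h2 | h2
      · subst h2
        rw [lp.single_apply_self, lp.single_apply_ne _ _ _ (by decide : (0:ℤ) ≠ -1), zero_add]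
      · rw [lp.single_apply_ne _ _ _ h1, lp.single_apply_ne _ _ _ h2, add_zero]
        have hx1 : x + 1 ≠ 0 := by omega
        simp only [hf, hx1, h2, if_false]
        ext i
        fin_cases i <;> rfl
  have hcomp : ∀ x : ℤ,
      ψ x 0 = c * (if x + 1 = 0 then 1 else 0) ∧ ψ x 1 = d * (if x = 0 then 1 else 0) := by
    intro x
    have h0 : ψ x 0 = (if x + 1 = 0 then c else 0) := by
      rw [hcoord x]; simp [hf, WithLp.equiv_symm_apply]
    have h1 : ψ x 1 = (if x = 0 then d else 0) := by
      rw [hcoord x]; simp [hf, WithLp.equiv_symm_apply]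
    constructor
    · rw [h0]; split <;> ring
    · rw [h1]; split <;> ring
  have hexp1 : ‖Complex.exp ((β' - γ' / 2 : ℝ) * Complex.I)‖ = 1 := by
    rw [Complex.norm_exp_ofReal_mul_I]
  have hdabs : ‖d‖ = 1 / Real.sqrt 2 := by
    rw [hd, norm_div, norm_one, Complex.norm_real, Real.norm_eq_abs,
      abs_of_nonneg (Real.sqrt_nonneg 2)]
  have hcabs : ‖c‖ = 1 / Real.sqrt 2 := by
    rw [hc, norm_mul, norm_mul, norm_neg, hs, hexp1, hdabs]
    ring
  have hfn1 : ‖f (-1)‖ ^ 2 = 1 / 2 := by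
    rw [hf]
    simp only
    rw [EuclideanSpace.norm_eq]
    simp only [WithLp.equiv_symm_apply, WithLp.ofLp_toLp]
    rw [Fin.sum_univ_two]
    norm_num [hcabs]
  have hfn0 : ‖f 0‖ ^ 2 = 1 / 2 := by
    rw [hf]
    simp only
    rw [EuclideanSpace.norm_eq]
    simp only [WithLp.equiv_symm_apply, WithLp.ofLp_toLp]
    rw [Fin.sum_univ_two]
    norm_num [hdabs]
  have hnorm : ‖ψ‖ = 1 := by
    have h2 : (0:ℝ) < (2 : ℝ≥0∞).toReal := by norm_num
    have hns := lp.norm_sum_single (p := 2) h2 f ({-1, 0} : Finset ℤ)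
    rw [← hψdef, Finset.sum_insert hne, Finset.sum_singleton] at hns
    have ht : ((2 : ℝ≥0∞).toReal) = (2 : ℝ) := by norm_num
    rw [ht] at hns
    rw [show (2:ℝ) = ((2:ℕ):ℝ) by norm_num] at hns
    rw [Real.rpow_natCast, Real.rpow_natCast, Real.rpow_natCast] at hns
    rw [hfn1, hfn0] at hns
    norm_num at hns
    rcases hns with h | h
    · exact h
    · linarith [norm_nonneg ψ]
  set μ : ℂ := s * Complex.exp ((γ' / 2 : ℝ) * Complex.I) with hμ
  have hE1 : Complex.exp (((γ' / 2 : ℝ) : ℂ) * Complex.I) *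
      Complex.exp (((β' - γ' / 2 : ℝ) : ℂ) * Complex.I) =
      Complex.exp (((β' : ℝ) : ℂ) * Complex.I) := by
    rw [← Complex.exp_add]; congr 1; push_cast; ring
  have hE2 : Complex.exp (((γ' - β' : ℝ) : ℂ) * Complex.I) *
      Complex.exp (((β' - γ' / 2 : ℝ) : ℂ) * Complex.I) =
      Complex.exp (((γ' / 2 : ℝ) : ℂ) * Complex.I) := by
    rw [← Complex.exp_add]; congr 1; push_cast; ring
  have hk1 : Complex.exp ((β' : ℝ) * Complex.I) * d = μ * c := by
    rw [hμ, hc, hd]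
    linear_combination (1 / ((Real.sqrt 2 : ℝ) : ℂ)) *
        Complex.exp (((γ' / 2 : ℝ) : ℂ) * Complex.I) *
        Complex.exp (((β' - γ' / 2 : ℝ) : ℂ) * Complex.I) * hs2 -
      (1 / ((Real.sqrt 2 : ℝ) : ℂ)) * hE1
  have hk2 : -Complex.exp ((γ' - β' : ℝ) * Complex.I) * c = μ * d := by
    rw [hμ, hc, hd]
    linear_combination (1 / ((Real.sqrt 2 : ℝ) : ℂ)) * s * hE2
  have heig : U₁ ψ = μ • ψ := by
    refine lp.ext (funext fun x => ?_)
    rw [lp.coeFn_smul, Pi.smul_apply]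
    ext i
    fin_cases i
    · show (U₁ ψ) x 0 = (μ • (ψ : ∀ _ : ℤ, EuclideanSpace ℂ (Fin 2)) x) 0
      rw [WithLp.ofLp_smul, Pi.smul_apply, smul_eq_mul]
      rw [(hU₁eq ψ x).1, (hcomp (x + 1)).2, (hcomp x).1]
      rw [zero_mul, zero_add]
      split_ifs with h
      · linear_combination hk1
      · ring
    · show (U₁ ψ) x 1 = (μ • (ψ : ∀ _ : ℤ, EuclideanSpace ℂ (Fin 2)) x) 1
      rw [WithLp.ofLp_smul, Pi.smul_apply, smul_eq_mul]
      rw [(hU₁eq ψ x).2, (hcomp (x - 1)).1, (hcomp x).2]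
      rw [zero_mul, add_zero]
      have hxx : x - 1 + 1 = x := by ring
      rw [hxx]
      split_ifs with h
      · linear_combination hk2
      · ring
  exact ⟨ψ, hcomp, hnorm, heig⟩

/-- the quantum walk `U₁ = SC₁` with the anti-diagonal coin `C₁` has the
normalized eigenfunctions `ψ_±` (supported on two sites) with eigenvalues `± i e^{iγ'/2}`. -/
theorem eigenfunctions_of_U1
    (β' γ' : ℝ) (hβ' : β' ∈ Set.Ico 0 (2 * Real.pi)) (hγ' : γ' ∈ Set.Ico 0 (2 * Real.pi))
    (U₁ : H2 →L[ℂ] H2) (hU₁ : U₁ ∈ unitary (H2 →L[ℂ] H2))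
    (hU₁eq : ∀ (ψ : H2) (x : ℤ),
      (U₁ ψ) x 0 = (0 : ℂ) * ψ (x + 1) 0 + Complex.exp (β' * Complex.I) * ψ (x + 1) 1 ∧
      (U₁ ψ) x 1 = -Complex.exp ((γ' - β' : ℝ) * Complex.I) * ψ (x - 1) 0
          + (0 : ℂ) * ψ (x - 1) 1) :
    ∃ ψp ψm : H2,
      (∀ x : ℤ,
        ψp x 0 = (1 / Real.sqrt 2 : ℂ) * (-Complex.I) *
            Complex.exp ((β' - γ' / 2 : ℝ) * Complex.I) * (if x + 1 = 0 then 1 else 0) ∧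
        ψp x 1 = (1 / Real.sqrt 2 : ℂ) * (if x = 0 then 1 else 0)) ∧
      (∀ x : ℤ,
        ψm x 0 = (1 / Real.sqrt 2 : ℂ) * Complex.I *
            Complex.exp ((β' - γ' / 2 : ℝ) * Complex.I) * (if x + 1 = 0 then 1 else 0) ∧
        ψm x 1 = (1 / Real.sqrt 2 : ℂ) * (if x = 0 then 1 else 0)) ∧
      ‖ψp‖ = 1 ∧ ‖ψm‖ = 1 ∧
      U₁ ψp = (Complex.I * Complex.exp ((γ' / 2 : ℝ) * Complex.I)) • ψp ∧
      U₁ ψm = (-Complex.I * Complex.exp ((γ' / 2 : ℝ) * Complex.I)) • ψm ∧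
      IsEigenvalue U₁ (Complex.I * Complex.exp ((γ' / 2 : ℝ) * Complex.I)) ∧
      IsEigenvalue U₁ (-Complex.I * Complex.exp ((γ' / 2 : ℝ) * Complex.I)) := by
  obtain ⟨ψp, hcp, hnp, hep⟩ := aux_eig β' γ' U₁ hU₁eq Complex.I
    (by rw [Complex.I_sq]) (by simp)
  obtain ⟨ψm, hcm, hnm, hem⟩ := aux_eig β' γ' U₁ hU₁eq (-Complex.I)
    (by rw [neg_sq, Complex.I_sq]) (by simp)
  have hem' : U₁ ψm = (-Complex.I * Complex.exp ((γ' / 2 : ℝ) * Complex.I)) • ψm := by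
    rw [hem]
  refine ⟨ψp, ψm, hcp, fun x => ⟨by rw [(hcm x).1]; ring, (hcm x).2⟩, hnp, hnm, hep, hem',
    ⟨ψp, ?_, hep⟩, ⟨ψm, ?_, hem'⟩⟩
  · exact norm_ne_zero_iff.mp (by rw [hnp]; norm_num)
  · exact norm_ne_zero_iff.mp (by rw [hnm]; norm_num)
end
end

section
/- Suppose p ∈ (0,1] and let C be the edge-defect coin (1.4) built from coins C₁, C₂ and defect set e (with N ≥ 1), and U = SC. Then for any γ' ∈ [0,2π), both i e^{iγ'/2} and −i e^{iγ'/2} are eigenvalues of U, and there exist corresponding eigenfunctions Ψ_± ∈ H with support contained in e. -/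
noncomputable section

/-- The defect set `e = ∪_j {y_j - 1, y_j}` as a finite subset of `ℤ`. -/
def defectSet {N : ℕ} (y : Fin N → ℤ) : Finset ℤ :=
  (Finset.univ.image fun j => y j - 1) ∪ Finset.univ.image y


/-- Theorem 1.2 (2): for the edge-defect coin, `± i e^{iγ'/2}` are
eigenvalues of `U` with eigenfunctions supported in the defect set `e`. -/
theorem embedded_eigenvalues_exist
    (N : ℕ) (hN : 0 < N) (y : Fin N → ℤ)
    (p q α β γ : ℝ)
    (hp : p ∈ Set.Ioc (0 : ℝ) 1) (hq : q ∈ Set.Icc (0 : ℝ) 1) (hpq : p ^ 2 + q ^ 2 = 1)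
    (hα : α ∈ Set.Ico 0 (2 * Real.pi)) (hβ : β ∈ Set.Ico 0 (2 * Real.pi))
    (hγ : γ ∈ Set.Ico 0 (2 * Real.pi))
    (β' γ' : ℝ) (hβ' : β' ∈ Set.Ico 0 (2 * Real.pi))
    (hγ' : γ' ∈ Set.Ico 0 (2 * Real.pi))
    (a₂ b₂ c₂ d₂ : ℤ → ℂ)
    (hcoin₂ : ∀ x : ℤ, !![a₂ x, b₂ x; c₂ x, d₂ x] ∈ Matrix.unitaryGroup (Fin 2) ℂ)
    (δ : ℝ) (hδ : 0 < δ) (ha₂ : ∀ x : ℤ, δ ≤ ‖a₂ x‖)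
    (M ρ : ℝ) (hM : 0 < M) (hρ : 0 < ρ)
    (hdecay : ∀ x : ℤ,
      ‖a₂ x - (p : ℂ) * Complex.exp (α * Complex.I)‖ ≤ M * Real.exp (-ρ * jap x) ∧
      ‖b₂ x - (q : ℂ) * Complex.exp (β * Complex.I)‖ ≤ M * Real.exp (-ρ * jap x) ∧
      ‖c₂ x - (-(q : ℂ) * Complex.exp ((γ - β : ℝ) * Complex.I))‖
          ≤ M * Real.exp (-ρ * jap x) ∧
      ‖d₂ x - (p : ℂ) * Complex.exp ((γ - α : ℝ) * Complex.I)‖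
          ≤ M * Real.exp (-ρ * jap x))
    (a b c d : ℤ → ℂ)
    (hcoinE : ∀ x ∈ defectSet y,
      a x = 0 ∧ b x = Complex.exp (β' * Complex.I) ∧
        c x = -Complex.exp ((γ' - β' : ℝ) * Complex.I) ∧ d x = 0)
    (hcoinNE : ∀ x ∉ defectSet y,
      a x = a₂ x ∧ b x = b₂ x ∧ c x = c₂ x ∧ d x = d₂ x)
    (U : H2 →L[ℂ] H2) (hU : U ∈ unitary (H2 →L[ℂ] H2))
    (hUeq : ∀ (ψ : H2) (x : ℤ),
      (U ψ) x 0 = a (x + 1) * ψ (x + 1) 0 + b (x + 1) * ψ (x + 1) 1 ∧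
      (U ψ) x 1 = c (x - 1) * ψ (x - 1) 0 + d (x - 1) * ψ (x - 1) 1) :
    IsEigenvalue U (Complex.I * Complex.exp ((γ' / 2 : ℝ) * Complex.I)) ∧
    IsEigenvalue U (-Complex.I * Complex.exp ((γ' / 2 : ℝ) * Complex.I)) ∧
    (∃ Ψp : H2, Ψp ≠ 0 ∧
      U Ψp = (Complex.I * Complex.exp ((γ' / 2 : ℝ) * Complex.I)) • Ψp ∧
      ∀ x : ℤ, x ∉ defectSet y → Ψp x = 0) ∧
    (∃ Ψm : H2, Ψm ≠ 0 ∧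
      U Ψm = (-Complex.I * Complex.exp ((γ' / 2 : ℝ) * Complex.I)) • Ψm ∧
      ∀ x : ℤ, x ∉ defectSet y → Ψm x = 0) := by
  classical
  set y₀ := y ⟨0, hN⟩ with hy₀
  have hm1 : y₀ - 1 ∈ defectSet y :=
    Finset.mem_union_left _ (Finset.mem_image_of_mem _ (Finset.mem_univ (⟨0, hN⟩ : Fin N)))
  have hm2 : y₀ ∈ defectSet y :=
    Finset.mem_union_right _ (Finset.mem_image_of_mem _ (Finset.mem_univ (⟨0, hN⟩ : Fin N)))
  have hne : y₀ - 1 ≠ y₀ := by omega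
  have hexpinv : Complex.exp ((β' : ℂ) * Complex.I) * Complex.exp (-(β' : ℂ) * Complex.I) = 1 := by
    rw [← Complex.exp_add]
    have : (β' : ℂ) * Complex.I + -(β' : ℂ) * Complex.I = 0 := by ring
    rw [this, Complex.exp_zero]
  have main : ∀ μ : ℂ, μ * μ = -Complex.exp ((γ' : ℂ) * Complex.I) →
      ∃ Ψ : H2, Ψ ≠ 0 ∧ U Ψ = μ • Ψ ∧ ∀ x : ℤ, x ∉ defectSet y → Ψ x = 0 := by
    intro μ hμ
    set v : ℂ := μ * Complex.exp (-(β' : ℂ) * Complex.I) with hv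
    set Ψ₁ : H2 := lp.single 2 (y₀ - 1) (EuclideanSpace.single 0 (1 : ℂ)) with hΨ₁
    set Ψ₂ : H2 := lp.single 2 y₀ (EuclideanSpace.single 1 v) with hΨ₂
    set Ψ : H2 := Ψ₁ + Ψ₂ with hΨdef
    have hadd : ∀ (x : ℤ) (i : Fin 2), Ψ x i = Ψ₁ x i + Ψ₂ x i := by
      intro x i; rw [hΨdef, lp.coeFn_add]; rfl
    have hval0 : ∀ x : ℤ, Ψ x 0 = if x = y₀ - 1 then 1 else 0 := by
      intro x
      rw [hadd]
      by_cases h1 : x = y₀ - 1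
      · subst h1
        rw [hΨ₁, hΨ₂, lp.single_apply_self, lp.single_apply_ne 2 y₀ _ hne]
        simp [EuclideanSpace.single_apply]
      · have h2 : x ≠ y₀ ∨ x = y₀ := by omega
        rw [hΨ₁, lp.single_apply_ne 2 _ _ h1]
        rcases h2 with h2 | h2
        · rw [hΨ₂, lp.single_apply_ne 2 _ _ h2]; simp [h1]
        · subst h2; rw [hΨ₂, lp.single_apply_self]
          simp [EuclideanSpace.single_apply, h1]
    have hval1 : ∀ x : ℤ, Ψ x 1 = if x = y₀ then v else 0 := by
      intro x
      rw [hadd]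
      by_cases h2 : x = y₀
      · subst h2
        rw [hΨ₁, hΨ₂, lp.single_apply_self, lp.single_apply_ne 2 _ _ hne.symm]
        simp [EuclideanSpace.single_apply]
      · rw [hΨ₂, lp.single_apply_ne 2 _ _ h2]
        by_cases h1 : x = y₀ - 1
        · subst h1; rw [hΨ₁, lp.single_apply_self]
          simp [EuclideanSpace.single_apply, h2]
        · rw [hΨ₁, lp.single_apply_ne 2 _ _ h1]; simp [h2]
    have hsm : ∀ (x : ℤ) (i : Fin 2), (μ • Ψ) x i = μ * Ψ x i := by
      intro x i; rw [lp.coeFn_smul]; rfl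
    refine ⟨Ψ, ?_, ?_, ?_⟩
    · intro h
      have h0 := hval0 (y₀ - 1)
      rw [h] at h0
      simp at h0
    · refine lp.ext (funext fun x => ?_)
      have hc0 : (U Ψ) x 0 = (μ • Ψ) x 0 := by
        rw [(hUeq Ψ x).1, hsm, hval0, hval0, hval1]
        by_cases hx : x + 1 = y₀
        · have hx' : x = y₀ - 1 := by omega
          have hxne : x + 1 ≠ y₀ - 1 := by omega
          rw [if_pos hx, if_neg hxne, if_pos hx', hx]
          rw [(hcoinE y₀ hm2).2.1, (hcoinE y₀ hm2).1, hv]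
          calc (0 : ℂ) * 0 +
                Complex.exp ((β' : ℂ) * Complex.I) * (μ * Complex.exp (-(β' : ℂ) * Complex.I))
              = (Complex.exp ((β' : ℂ) * Complex.I) * Complex.exp (-(β' : ℂ) * Complex.I)) * μ := by
                ring
            _ = μ * 1 := by rw [hexpinv]; ring
        · by_cases hx' : x + 1 = y₀ - 1
          · have h1 : x ≠ y₀ - 1 := by omega
            rw [if_pos hx', if_neg hx, if_neg h1, hx', (hcoinE (y₀ - 1) hm1).1]
            ring
          · have h1 : x ≠ y₀ - 1 := by omega
            rw [if_neg hx', if_neg hx, if_neg h1]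
            ring
      have hc1 : (U Ψ) x 1 = (μ • Ψ) x 1 := by
        rw [(hUeq Ψ x).2, hsm, hval1, hval0, hval1]
        by_cases hx : x - 1 = y₀ - 1
        · have hx' : x = y₀ := by omega
          have hxne : x - 1 ≠ y₀ := by omega
          rw [if_pos hx, if_neg hxne, if_pos hx', hx, (hcoinE (y₀ - 1) hm1).2.2.1]
          have hc : ((γ' - β' : ℝ) : ℂ) * Complex.I = (γ' : ℂ) * Complex.I + -(β' : ℂ) * Complex.I := by
            push_cast; ring
          rw [hc, Complex.exp_add, hv]
          calc -(Complex.exp ((γ' : ℂ) * Complex.I) * Complex.exp (-(β' : ℂ) * Complex.I)) * 1 +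
                d (y₀ - 1) * 0
              = -Complex.exp ((γ' : ℂ) * Complex.I) * Complex.exp (-(β' : ℂ) * Complex.I) := by ring
            _ = (μ * μ) * Complex.exp (-(β' : ℂ) * Complex.I) := by rw [hμ]
            _ = μ * (μ * Complex.exp (-(β' : ℂ) * Complex.I)) := by ring
        · by_cases hx' : x - 1 = y₀
          · have h2 : x ≠ y₀ := by omega
            rw [if_pos hx', if_neg hx, if_neg h2, hx', (hcoinE y₀ hm2).2.2.2]
            ring
          · have h2 : x ≠ y₀ := by omega
            rw [if_neg hx', if_neg hx, if_neg h2]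
            ring
      ext i
      fin_cases i
      · exact hc0
      · exact hc1
    · intro x hx
      have h1 : x ≠ y₀ - 1 := fun h => hx (h ▸ hm1)
      have h2 : x ≠ y₀ := fun h => hx (h ▸ hm2)
      have hc0 : Ψ x 0 = (0 : ℂ) := by rw [hval0, if_neg h1]
      have hc1 : Ψ x 1 = (0 : ℂ) := by rw [hval1, if_neg h2]
      ext i
      fin_cases i
      · exact hc0
      · exact hc1
  have he : Complex.exp (((γ' / 2 : ℝ) : ℂ) * Complex.I) *
      Complex.exp (((γ' / 2 : ℝ) : ℂ) * Complex.I) = Complex.exp ((γ' : ℂ) * Complex.I) := by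
    rw [← Complex.exp_add]
    congr 1
    push_cast
    ring
  have hp' : (Complex.I * Complex.exp (((γ' / 2 : ℝ) : ℂ) * Complex.I)) *
      (Complex.I * Complex.exp (((γ' / 2 : ℝ) : ℂ) * Complex.I)) =
      -Complex.exp ((γ' : ℂ) * Complex.I) := by
    rw [show (Complex.I * Complex.exp (((γ' / 2 : ℝ) : ℂ) * Complex.I)) *
        (Complex.I * Complex.exp (((γ' / 2 : ℝ) : ℂ) * Complex.I)) =
        (Complex.I * Complex.I) * (Complex.exp (((γ' / 2 : ℝ) : ℂ) * Complex.I) *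
          Complex.exp (((γ' / 2 : ℝ) : ℂ) * Complex.I)) from by ring,
      Complex.I_mul_I, he]
    ring
  have hm' : (-Complex.I * Complex.exp (((γ' / 2 : ℝ) : ℂ) * Complex.I)) *
      (-Complex.I * Complex.exp (((γ' / 2 : ℝ) : ℂ) * Complex.I)) =
      -Complex.exp ((γ' : ℂ) * Complex.I) := by
    rw [show (-Complex.I * Complex.exp (((γ' / 2 : ℝ) : ℂ) * Complex.I)) *
        (-Complex.I * Complex.exp (((γ' / 2 : ℝ) : ℂ) * Complex.I)) =
        (Complex.I * Complex.I) * (Complex.exp (((γ' / 2 : ℝ) : ℂ) * Complex.I) *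
          Complex.exp (((γ' / 2 : ℝ) : ℂ) * Complex.I)) from by ring,
      Complex.I_mul_I, he]
    ring
  obtain ⟨Ψp, hΨp0, hΨpU, hΨps⟩ := main _ hp'
  obtain ⟨Ψm, hΨm0, hΨmU, hΨms⟩ := main _ hm'
  exact ⟨⟨Ψp, hΨp0, hΨpU⟩, ⟨Ψm, hΨm0, hΨmU⟩, ⟨Ψp, hΨp0, hΨpU, hΨps⟩, ⟨Ψm, hΨm0, hΨmU, hΨms⟩⟩
end
end
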